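/- If a quantum state ρ on the symmetric subspace of C^d ⊗ C^d is absolutely symmetric PPT, then all d(d+1)/2 of its eigenvalues are strictly positive. Equivalently: if λ_1 ≥ ... ≥ λ_n ≥ 0 (n = d(d+1)/2) sum to 1 and every d×d symmetric matricization of (λ_1,...,λ_n) is positive semidefinite, then λ_n > 0. -/

import Mathlib

/-!
If `λ i ≤ 0`, choose a matricization with `λ i` in the corner `(0, 0)` and another entry `λ j`
at `(0, 1)`. The diagonal entry `2 λ i` of a positive semidefinite matrix is nonnegative, hence
zero, and a zero diagonal entry kills its whole row (the `2 × 2` principal minor is `-(λ j)²`),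
so `λ j = 0`. Thus `∑ λ = λ i ≤ 0`, contradicting `∑ λ = 1`.
-/

open Matrix

/-- The symmetric matricization of the vector `lam` determined by a bijection `e`
from the upper-triangular positions of a d×d matrix to the index set of `lam`:
it is X + Xᵀ where X is upper triangular with upper-triangular entries the
entries of `lam` in the order prescribed by `e`. -/
noncomputable def symMatricization (d : ℕ) (lam : Fin (d * (d + 1) / 2) → ℝ)
    (e : {p : Fin d × Fin d // p.1 ≤ p.2} ≃ Fin (d * (d + 1) / 2)) :
    Matrix (Fin d) (Fin d) ℝ :=
  fun i j =>
    if h : i ≤ j then (if i = j then 2 else 1) * lam (e ⟨(i, j), h⟩)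
    else lam (e ⟨(j, i), (le_total i j).resolve_left h⟩)

theorem Matrix.PosSemidef.apply_eq_zero_of_diag_eq_zero {n : Type*} {M : Matrix n n ℝ}
    (hM : M.PosSemidef) {i : n} (hi : M i i = 0) (j : n) : M i j = 0 := by
  have hdet := (hM.submatrix ![i, j]).det_nonneg
  have hsymm : M j i = M i j := by simpa using hM.1.apply i j
  rw [det_fin_two] at hdet
  simp only [submatrix_apply, cons_val_zero, cons_val_one, hi, hsymm] at hdet
  nlinarith [sq_nonneg (M i j)]

theorem Equiv.exists_apply_eq_and_apply_eq {α β : Type*} [DecidableEq β] (e₀ : α ≃ β)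
    {p q : α} {a b : β} (hpq : p ≠ q) (hab : a ≠ b) : ∃ e : α ≃ β, e p = a ∧ e q = b := by
  set e₁ := e₀.trans (swap (e₀ p) a)
  have h₁ : e₁ p = a := by simp [e₁]
  have hq : a ≠ e₁ q := h₁ ▸ e₁.injective.ne hpq
  exact ⟨e₁.trans (swap (e₁ q) b), by simp [h₁, swap_apply_of_ne_of_ne hq hab], by simp⟩

theorem card_upperTriangularPositions (d : ℕ) :
    Fintype.card {p : Fin d × Fin d // p.1 ≤ p.2} = d * (d + 1) / 2 := by
  rw [← Fintype.card_congr (Sym2.sortEquiv (α := Fin d)), Sym2.card]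
  simp [Nat.choose_two_right, Nat.mul_comm]

section symMatricization

variable {d : ℕ} {lam : Fin (d * (d + 1) / 2) → ℝ}
  {e : {p : Fin d × Fin d // p.1 ≤ p.2} ≃ Fin (d * (d + 1) / 2)}

theorem symMatricization_apply_self (i : Fin d) :
    symMatricization d lam e i i = 2 * lam (e ⟨(i, i), le_rfl⟩) := by
  simp [symMatricization]

theorem symMatricization_apply_of_lt {i j : Fin d} (h : i < j) :
    symMatricization d lam e i j = lam (e ⟨(i, j), h.le⟩) := by
  simp [symMatricization, h.le, h.ne]

end symMatricization

theorem eq_zero_of_forall_symMatricization_posSemidef {d : ℕ} {lam : Fin (d * (d + 1) / 2) → ℝ}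
    (hPSD : ∀ e, (symMatricization d lam e).PosSemidef) {i j : Fin (d * (d + 1) / 2)}
    (hij : i ≠ j) (hi : lam i ≤ 0) : lam j = 0 := by
  have hd : 2 ≤ d := by
    have := i.2; have := j.2; have := Fin.val_ne_of_ne hij
    by_contra!
    interval_cases d <;> omega
  let z : Fin d := ⟨0, by omega⟩
  let o : Fin d := ⟨1, by omega⟩
  have hzo : z < o := Fin.mk_lt_mk.mpr one_pos
  obtain ⟨e, hei, hej⟩ :=
    (Fintype.equivFinOfCardEq (card_upperTriangularPositions d)).exists_apply_eq_and_apply_eq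
      (p := ⟨(z, z), le_rfl⟩) (q := ⟨(z, o), hzo.le⟩) (by simp [Subtype.ext_iff, hzo.ne]) hij
  have hM := hPSD e
  have hzz : symMatricization d lam e z z = 0 := by
    have := hM.diag_nonneg (i := z)
    rw [symMatricization_apply_self, hei] at this ⊢
    linarith
  simpa [symMatricization_apply_of_lt hzo, hej] using hM.apply_eq_zero_of_diag_eq_zero hzz o

theorem stmt7_general (d : ℕ) (lam : Fin (d * (d + 1) / 2) → ℝ)
    (hsum : ∑ i, lam i = 1)
    (hPSD : ∀ e : {p : Fin d × Fin d // p.1 ≤ p.2} ≃ Fin (d * (d + 1) / 2),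
      (symMatricization d lam e).PosSemidef) :
    ∀ i, 0 < lam i := by
  intro i
  by_contra! hi
  have hsum_eq : ∑ j, lam j = lam i := Finset.sum_eq_single i
    (fun j _ hji => eq_zero_of_forall_symMatricization_posSemidef hPSD (Ne.symm hji) hi)
    (by simp)
  linarith

theorem stmt7 (d : ℕ) (lam : Fin (d * (d + 1) / 2) → ℝ)
    (hsort : ∀ i j, i ≤ j → lam j ≤ lam i)
    (hnonneg : ∀ i, 0 ≤ lam i)
    (hsum : ∑ i, lam i = 1)
    (hPSD : ∀ e : {p : Fin d × Fin d // p.1 ≤ p.2} ≃ Fin (d * (d + 1) / 2),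
      (symMatricization d lam e).PosSemidef) :
    ∀ i, 0 < lam i :=
  stmt7_general d lam hsum hPSD
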